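/- Let d ≥ 1 and let P be an affine hyperplane in ℝ^d with unit normal vector n = (n₁,…,n_d). Let f⁺, f⁻ : ℝ^d → ℝ be differentiable at a point x₀ ∈ P, and assume f⁺(x) = f⁻(x) for all x ∈ P. Then for all coordinate indices j, k ∈ {1,…,d} the jump tensor is symmetric: (∂_j f⁺(x₀) − ∂_j f⁻(x₀)) · n_k = (∂_k f⁺(x₀) − ∂_k f⁻(x₀)) · n_j. -/

import Mathlib

/-!
The jump `L = fderiv f⁺ x₀ - fderiv f⁻ x₀` vanishes on the direction of `P`, which is `n^⊥`
because `P` has codimension one. For all `u, w` the vector `⟪n, w⟫ • u - ⟪n, u⟫ • w` is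
orthogonal to `n`, so `L` kills it; for `u = eⱼ`, `w = eₖ` this is the claimed symmetry.
-/

open Module Set

theorem fderiv_apply_eq_of_eqOn_affineSubspace {E F : Type*} [NormedAddCommGroup E]
    [NormedSpace ℝ E] [NormedAddCommGroup F] [NormedSpace ℝ F] {P : AffineSubspace ℝ E}
    {f g : E → F} {x : E} (hx : x ∈ P) (hf : DifferentiableAt ℝ f x)
    (hg : DifferentiableAt ℝ g x) (hfg : EqOn f g P) {v : E} (hv : v ∈ P.direction) :
    fderiv ℝ f x v = fderiv ℝ g x v := by
  have hcone : v ∈ tangentConeAt ℝ P x := by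
    simpa using mem_tangentConeAt_of_segment_subset
      (P.convex.segment_subset hx (AffineSubspace.vadd_mem_of_mem_direction hv hx))
  exact hf.hasFDerivAt.hasFDerivWithinAt.unique_on
    (hg.hasFDerivAt.hasFDerivWithinAt.congr hfg (hfg hx)) hcone

theorem Submodule.orthogonal_span_singleton_eq_of_finrank_eq {𝕜 E : Type*} [RCLike 𝕜]
    [NormedAddCommGroup E] [InnerProductSpace 𝕜 E] [FiniteDimensional 𝕜 E] {K : Submodule 𝕜 E}
    (hK : finrank 𝕜 K = finrank 𝕜 E - 1) {n : E} (hn : n ∈ Kᗮ) (hn0 : n ≠ 0) :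
    (𝕜 ∙ n)ᗮ = K := by
  have hspan : (𝕜 ∙ n) = Kᗮ := by
    refine Submodule.eq_of_le_of_finrank_le ((span_singleton_le_iff_mem _ _).mpr hn) ?_
    have := K.finrank_add_finrank_orthogonal
    rw [finrank_span_singleton hn0]
    omega
  rw [hspan, orthogonal_orthogonal]

theorem LinearMap.inner_smul_apply_eq_of_orthogonal_le_ker {𝕜 E F : Type*} [RCLike 𝕜]
    [NormedAddCommGroup E] [InnerProductSpace 𝕜 E] [AddCommGroup F] [Module 𝕜 F]
    (L : E →ₗ[𝕜] F) {n : E} (hL : (𝕜 ∙ n)ᗮ ≤ LinearMap.ker L) (u w : E) :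
    inner 𝕜 n w • L u = inner 𝕜 n u • L w := by
  have hmem : inner 𝕜 n w • u - inner 𝕜 n u • w ∈ (𝕜 ∙ n)ᗮ := by
    rw [Submodule.mem_orthogonal_singleton_iff_inner_right, inner_sub_right, inner_smul_right,
      inner_smul_right, mul_comm, sub_self]
  simpa [sub_eq_zero] using hL hmem

theorem gradient_jump_tensor_symmetric_general
    (d : ℕ)
    (P : AffineSubspace ℝ (EuclideanSpace ℝ (Fin d)))
    (hP : Module.finrank ℝ P.direction = d - 1)
    (n : EuclideanSpace ℝ (Fin d)) (hn : n ∈ P.directionᗮ) (hn1 : ‖n‖ = 1)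
    (fplus fminus : EuclideanSpace ℝ (Fin d) → ℝ)
    (x₀ : EuclideanSpace ℝ (Fin d)) (hx₀ : x₀ ∈ P)
    (hfp : DifferentiableAt ℝ fplus x₀) (hfm : DifferentiableAt ℝ fminus x₀)
    (heq : ∀ x ∈ P, fplus x = fminus x)
    (j k : Fin d) :
    (fderiv ℝ fplus x₀ (EuclideanSpace.single j 1)
        - fderiv ℝ fminus x₀ (EuclideanSpace.single j 1)) * n k =
      (fderiv ℝ fplus x₀ (EuclideanSpace.single k 1)
        - fderiv ℝ fminus x₀ (EuclideanSpace.single k 1)) * n j := by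
  have hdir : (ℝ ∙ n)ᗮ = P.direction :=
    Submodule.orthogonal_span_singleton_eq_of_finrank_eq (by rwa [finrank_euclideanSpace_fin])
      hn (norm_ne_zero_iff.mp (by rw [hn1]; exact one_ne_zero))
  have hjump : (ℝ ∙ n)ᗮ ≤ LinearMap.ker (fderiv ℝ fplus x₀ - fderiv ℝ fminus x₀).toLinearMap :=
    fun v hv => sub_eq_zero.mpr <|
      fderiv_apply_eq_of_eqOn_affineSubspace hx₀ hfp hfm heq (hdir ▸ hv)
  simpa [EuclideanSpace.inner_single_right, mul_comm] using
    LinearMap.inner_smul_apply_eq_of_orthogonal_le_ker _ hjump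
      (EuclideanSpace.single j 1) (EuclideanSpace.single k 1)

/-- If two functions differentiable at a point `x₀` of an affine
hyperplane `P` of `ℝ^d` with unit normal `n` coincide on `P`, then the gradient-jump
tensor `(∂_j f⁺ − ∂_j f⁻) n_k` at `x₀` is symmetric in the indices `j, k`. -/
theorem gradient_jump_tensor_symmetric
    (d : ℕ) (hd : 1 ≤ d)
    (P : AffineSubspace ℝ (EuclideanSpace ℝ (Fin d)))
    (hP : Module.finrank ℝ P.direction = d - 1)
    (n : EuclideanSpace ℝ (Fin d)) (hn : n ∈ P.directionᗮ) (hn1 : ‖n‖ = 1)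
    (fplus fminus : EuclideanSpace ℝ (Fin d) → ℝ)
    (x₀ : EuclideanSpace ℝ (Fin d)) (hx₀ : x₀ ∈ P)
    (hfp : DifferentiableAt ℝ fplus x₀) (hfm : DifferentiableAt ℝ fminus x₀)
    (heq : ∀ x ∈ P, fplus x = fminus x)
    (j k : Fin d) :
    (fderiv ℝ fplus x₀ (EuclideanSpace.single j 1)
        - fderiv ℝ fminus x₀ (EuclideanSpace.single j 1)) * n k =
      (fderiv ℝ fplus x₀ (EuclideanSpace.single k 1)
        - fderiv ℝ fminus x₀ (EuclideanSpace.single k 1)) * n j :=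
  gradient_jump_tensor_symmetric_general d P hP n hn hn1 fplus fminus x₀ hx₀ hfp hfm heq j k
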